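/- arXiv:2501.13225 — 2 statements merged into one kernel-verified Lean document; each statement's English description precedes it below -/
import Mathlib

section
/- Let $a,b \in \mathbb{R}$ with $a^2+b^2 > 0$, $\sigma^2 = (a^2+b^2)^{-1}$, $\phi(s) = as+b|s|$, and $\Delta = \frac{b^2}{a^2+b^2}$. Then for all $\rho \in [-1,1]$, $\sigma^2 \hat{\phi}(\rho) = \rho + \Delta \frac{2}{\pi}(\sqrt{1-\rho^2} - \rho \arccos(\rho))$, where $\hat{\phi}$ is the dual function of $\phi$. -/
/-! In polar coordinates the pair `(x, ρ x + √(1 - ρ²) y)` is `r (cos θ, cos (θ - arccos ρ))`.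
Since `φ(s) = a s + b |s|` is positively homogeneous, the Gaussian double integral factors into the
radial integral `∫₀^∞ r³ e^{-r²/2} dr = 2` times `(2π)⁻¹ ∫ φ(cos θ) φ(cos (θ - α)) dθ`. Expanding
bilinearly, the mixed terms `cos θ |cos (θ - α)|` are `π`-antiperiodic and integrate to zero,
`∫ cos θ cos (θ - α) = π cos α`, and `∫ |cos θ| |cos (θ - α)| = (π - 2α) cos α + 2 sin α`. -/

open MeasureTheory ProbabilityTheory Real

/-- The dual function of `f ∈ L²(N(0,1))`. -/
noncomputable def dualFn (f : ℝ → ℝ) (ρ : ℝ) : ℝ :=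
  ∫ x, ∫ y, f x * f (ρ * x + Real.sqrt (1 - ρ ^ 2) * y)
    ∂(gaussianReal 0 1) ∂(gaussianReal 0 1)

open scoped NNReal

lemma integral_integral_gaussianReal_eq_integral_pdf_mul {μ₁ μ₂ : ℝ} {v₁ v₂ : ℝ≥0}
    (hv₁ : v₁ ≠ 0) (hv₂ : v₂ ≠ 0) {F : ℝ × ℝ → ℝ}
    (hF : Integrable F ((gaussianReal μ₁ v₁).prod (gaussianReal μ₂ v₂))) :
    ∫ x, ∫ y, F (x, y) ∂(gaussianReal μ₂ v₂) ∂(gaussianReal μ₁ v₁) =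
      ∫ p, gaussianPDFReal μ₁ v₁ p.1 * gaussianPDFReal μ₂ v₂ p.2 * F p := by
  rw [integral_integral (f := fun x y ↦ F (x, y)) hF, gaussianReal_of_var_ne_zero _ hv₁,
    gaussianReal_of_var_ne_zero _ hv₂,
    prod_withDensity (measurable_gaussianPDF _ _) (measurable_gaussianPDF _ _),
    ← Measure.volume_eq_prod, integral_withDensity_eq_integral_toReal_smul
      (by fun_prop) (ae_of_all _ fun _ ↦ ENNReal.mul_lt_top gaussianPDF_lt_top gaussianPDF_lt_top)]
  simp only [ENNReal.toReal_mul, toReal_gaussianPDF, smul_eq_mul]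

lemma gaussianPDFReal_zero_one_mul (x y : ℝ) :
    gaussianPDFReal 0 1 x * gaussianPDFReal 0 1 y = (2 * π)⁻¹ * exp (-(x ^ 2 + y ^ 2) / 2) := by
  simp only [gaussianPDFReal, NNReal.coe_one, mul_one, sub_zero]
  rw [mul_mul_mul_comm, ← mul_inv, mul_self_sqrt (by positivity), ← exp_add]
  ring_nf

lemma integral_Ioi_pow_three_mul_exp_neg_sq_div_two :
    ∫ r in Set.Ioi (0 : ℝ), r ^ 3 * exp (-r ^ 2 / 2) = 2 := by
  have h := integral_rpow_mul_exp_neg_mul_rpow (p := 2) (q := 3) (b := 2⁻¹)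
    (by norm_num) (by norm_num) (by norm_num)
  norm_num [Gamma_two] at h
  convert h using 1
  refine setIntegral_congr_fun measurableSet_Ioi fun r _ ↦ ?_
  norm_cast
  ring_nf

lemma exists_abs_le_mul_norm_sq_of_homogeneous {F : ℝ × ℝ → ℝ} (hF : Continuous F)
    (hhom : ∀ r : ℝ, 0 ≤ r → ∀ p, F (r • p) = r ^ 2 * F p) :
    ∃ C, ∀ p, |F p| ≤ C * ‖p‖ ^ 2 := by
  obtain ⟨C, hC⟩ := (isCompact_sphere (0 : ℝ × ℝ) 1).exists_bound_of_continuousOn hF.continuousOn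
  refine ⟨C, fun p ↦ ?_⟩
  rcases eq_or_ne p 0 with rfl | hp
  · simpa using hhom 0 le_rfl 0
  · have hunit : ‖p‖⁻¹ • p ∈ Metric.sphere (0 : ℝ × ℝ) 1 := by
      simpa using norm_smul_inv_norm (𝕜 := ℝ) hp
    calc |F p| = ‖p‖ ^ 2 * |F (‖p‖⁻¹ • p)| := by
          rw [← abs_of_nonneg (sq_nonneg ‖p‖), ← abs_mul, ← hhom _ (norm_nonneg p),
            smul_inv_smul₀ (norm_ne_zero_iff.mpr hp)]
      _ ≤ C * ‖p‖ ^ 2 := by rw [mul_comm]; gcongr; exact hC _ hunit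

lemma integrable_gaussianReal_prod_of_homogeneous {F : ℝ × ℝ → ℝ} (hF : Continuous F)
    (hhom : ∀ r : ℝ, 0 ≤ r → ∀ p, F (r • p) = r ^ 2 * F p) :
    Integrable F ((gaussianReal 0 1).prod (gaussianReal 0 1)) := by
  obtain ⟨C, hC⟩ := exists_abs_le_mul_norm_sq_of_homogeneous hF hhom
  have hsq : Integrable (fun x : ℝ ↦ x ^ 2) (gaussianReal 0 1) :=
    (memLp_id_gaussianReal 2).integrable_sq
  have hnorm :
      Integrable (fun p : ℝ × ℝ ↦ ‖p‖ ^ 2) ((gaussianReal 0 1).prod (gaussianReal 0 1)) := by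
    refine ((hsq.comp_fst _).add (hsq.comp_snd _)).mono' (by fun_prop) (ae_of_all _ fun p ↦ ?_)
    rw [norm_pow, norm_norm, Prod.norm_def, Real.norm_eq_abs, Real.norm_eq_abs]
    rcases max_cases |p.1| |p.2| with ⟨h, _⟩ | ⟨h, _⟩ <;>
      simp only [h, sq_abs, Pi.add_apply] <;> nlinarith
  exact (hnorm.const_mul C).mono' hF.aestronglyMeasurable (ae_of_all _ hC)

lemma integral_integral_gaussianReal_of_homogeneous {F : ℝ × ℝ → ℝ} (hF : Continuous F)
    (hhom : ∀ r : ℝ, 0 ≤ r → ∀ p, F (r • p) = r ^ 2 * F p) :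
    ∫ x, ∫ y, F (x, y) ∂(gaussianReal 0 1) ∂(gaussianReal 0 1) =
      π⁻¹ * ∫ θ in (-π)..π, F (cos θ, sin θ) := by
  rw [integral_integral_gaussianReal_eq_integral_pdf_mul one_ne_zero one_ne_zero
    (integrable_gaussianReal_prod_of_homogeneous hF hhom), ← integral_comp_polarCoord_symm,
    polarCoord_target]
  calc ∫ p in Set.Ioi 0 ×ˢ Set.Ioo (-π) π, p.1 • (gaussianPDFReal 0 1 (polarCoord.symm p).1 *
          gaussianPDFReal 0 1 (polarCoord.symm p).2 * F (polarCoord.symm p))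
      = ∫ p in Set.Ioi 0 ×ˢ Set.Ioo (-π) π,
          p.1 ^ 3 * exp (-p.1 ^ 2 / 2) * ((2 * π)⁻¹ * F (cos p.2, sin p.2)) := by
        refine setIntegral_congr_fun (measurableSet_Ioi.prod measurableSet_Ioo) ?_
        rintro ⟨r, θ⟩ ⟨hr, -⟩
        have hpolar : polarCoord.symm (r, θ) = r • (cos θ, sin θ) := by
          simp [Prod.smul_mk]
        dsimp only
        rw [hpolar, hhom r hr.le, smul_eq_mul, Prod.smul_fst, Prod.smul_snd,
          gaussianPDFReal_zero_one_mul]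
        simp only [smul_eq_mul, mul_pow]
        rw [← mul_add, cos_sq_add_sin_sq]
        ring_nf
    _ = (∫ r in Set.Ioi 0, r ^ 3 * exp (-r ^ 2 / 2)) *
          ∫ θ in Set.Ioo (-π) π, (2 * π)⁻¹ * F (cos θ, sin θ) := by
        rw [Measure.volume_eq_prod, ← Measure.prod_restrict]
        exact integral_prod_mul (fun r : ℝ ↦ r ^ 3 * exp (-r ^ 2 / 2))
          (fun θ : ℝ ↦ (2 * π)⁻¹ * F (cos θ, sin θ))
    _ = π⁻¹ * ∫ θ in (-π)..π, F (cos θ, sin θ) := by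
        rw [integral_Ioi_pow_three_mul_exp_neg_sq_div_two, integral_const_mul,
          intervalIntegral.integral_of_le (by linarith [pi_pos]), integral_Ioc_eq_integral_Ioo]
        field_simp

lemma dualFn_eq_of_homogeneous {f : ℝ → ℝ} (hf : Continuous f)
    (hhom : ∀ r : ℝ, 0 ≤ r → ∀ s, f (r * s) = r * f s) {ρ : ℝ} (hρ : ρ ∈ Set.Icc (-1 : ℝ) 1) :
    dualFn f ρ = π⁻¹ * ∫ θ in (-π)..π, f (cos θ) * f (cos (θ - arccos ρ)) := by
  have hrot : ∀ θ, ρ * cos θ + √(1 - ρ ^ 2) * sin θ = cos (θ - arccos ρ) := fun θ ↦ by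
    rw [cos_sub, cos_arccos hρ.1 hρ.2, sin_arccos]
    ring
  simp only [← hrot]
  refine integral_integral_gaussianReal_of_homogeneous
    (F := fun p ↦ f p.1 * f (ρ * p.1 + √(1 - ρ ^ 2) * p.2)) (by fun_prop) fun r hr p ↦ ?_
  simp only [Prod.smul_fst, Prod.smul_snd, smul_eq_mul]
  rw [show ρ * (r * p.1) + √(1 - ρ ^ 2) * (r * p.2) = r * (ρ * p.1 + √(1 - ρ ^ 2) * p.2) by ring,
    hhom r hr, hhom r hr]
  ring

section IntervalIntegral

open intervalIntegral

variable {E : Type*} [NormedAddCommGroup E] [NormedSpace ℝ E] {u : ℝ → E} {c : ℝ}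

theorem Function.Antiperiodic.intervalIntegral_neg_eq_zero (hu : Function.Antiperiodic u c)
    (hcont : Continuous u) : ∫ x in (-c)..c, u x = 0 := by
  have hshift : ∫ x in (-c)..0, u x = -∫ x in (0 : ℝ)..c, u x := by
    simpa [hu.sub_eq] using (integral_comp_sub_right u c (a := 0) (b := c)).symm
  rw [← integral_add_adjacent_intervals (hcont.intervalIntegrable _ _)
    (hcont.intervalIntegrable _ _), hshift, neg_add_cancel]

theorem Function.Periodic.intervalIntegral_neg_eq_two_mul (hu : Function.Periodic u c)
    (hcont : Continuous u) :
    ∫ x in (-c)..c, u x = (2 : ℝ) • ∫ x in (-(c / 2))..(c / 2), u x := by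
  have h := hu.intervalIntegral_add_zsmul_eq 2 (-c) fun _ _ ↦ hcont.intervalIntegrable _ _
  rw [show -c + (2 : ℤ) • c = c by simp; ring, hu.intervalIntegral_add_eq (-c) (-(c / 2))] at h
  rw [h, show -(c / 2) + c = c / 2 by ring]
  norm_cast

end IntervalIntegral

section Trigonometric

open intervalIntegral

variable (α : ℝ)

theorem integral_cos_mul_cos_sub (a b : ℝ) :
    ∫ θ in a..b, cos θ * cos (θ - α) =
      (b - a) * cos α / 2 + (sin (2 * b - α) - sin (2 * a - α)) / 4 := by
  have hderiv : ∀ θ, HasDerivAt (fun t ↦ t * cos α / 2 + sin (2 * t - α) / 4)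
      (cos θ * cos (θ - α)) θ := by
    intro θ
    refine ((((hasDerivAt_id' θ).mul_const (cos α)).div_const 2).add
      ((((hasDerivAt_id' θ).const_mul 2).sub_const α).sin.div_const 4)).congr_deriv ?_
    -- product-to-sum: `2 cos θ cos (θ - α) = cos α + cos (2θ - α)`
    have hsum := cos_sub θ (θ - α)
    rw [sub_sub_cancel] at hsum
    rw [hsum, show 2 * θ - α = θ + (θ - α) by ring, cos_add]
    ring
  rw [integral_eq_sub_of_hasDerivAt (fun θ _ ↦ hderiv θ)
    ((by fun_prop : Continuous _).intervalIntegrable _ _)]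
  ring

theorem integral_neg_pi_pi_cos_mul_cos_sub :
    ∫ θ in (-π)..π, cos θ * cos (θ - α) = π * cos α := by
  rw [integral_cos_mul_cos_sub, show 2 * π - α = -α + 2 * π by ring, sin_add_two_pi,
    show 2 * -π - α = -α - 2 * π by ring, sin_sub_two_pi]
  ring

theorem integral_neg_pi_pi_cos_mul_abs_cos_sub :
    ∫ θ in (-π)..π, cos θ * |cos (θ - α)| = 0 := by
  refine Function.Antiperiodic.intervalIntegral_neg_eq_zero (fun θ ↦ ?_) (by fun_prop)
  rw [cos_add_pi, add_sub_right_comm, cos_add_pi, abs_neg, neg_mul]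

theorem integral_neg_pi_pi_abs_cos_mul_cos_sub :
    ∫ θ in (-π)..π, |cos θ| * cos (θ - α) = 0 := by
  refine Function.Antiperiodic.intervalIntegral_neg_eq_zero (fun θ ↦ ?_) (by fun_prop)
  rw [cos_add_pi, add_sub_right_comm, cos_add_pi, abs_neg, mul_neg]

variable {α}

/-- On `[-π/2, π/2]` the factor `|cos θ|` is `cos θ`, and `cos (θ - α)` changes sign exactly at
`θ = α - π/2`. -/
theorem integral_neg_pi_pi_abs_cos_mul_abs_cos_sub (h₀ : 0 ≤ α) (hπ : α ≤ π) :
    ∫ θ in (-π)..π, |cos θ| * |cos (θ - α)| = (π - 2 * α) * cos α + 2 * sin α := by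
  have hper : Function.Periodic (fun θ ↦ |cos θ| * |cos (θ - α)|) π := fun θ ↦ by
    dsimp only
    rw [cos_add_pi, add_sub_right_comm, cos_add_pi, abs_neg, abs_neg]
  have hcont : Continuous fun θ ↦ |cos θ| * |cos (θ - α)| := by fun_prop
  rw [hper.intervalIntegral_neg_eq_two_mul hcont, ← integral_add_adjacent_intervals
    (b := α - π / 2) (hcont.intervalIntegrable _ _) (hcont.intervalIntegrable _ _)]
  have hneg : ∫ θ in (-(π / 2))..(α - π / 2), |cos θ| * |cos (θ - α)|
      = -∫ θ in (-(π / 2))..(α - π / 2), cos θ * cos (θ - α) := by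
    rw [← intervalIntegral.integral_neg]
    refine integral_congr fun θ hθ ↦ ?_
    rw [Set.uIcc_of_le (by linarith)] at hθ
    have hcos : 0 ≤ cos θ := cos_nonneg_of_mem_Icc ⟨hθ.1, by linarith [hθ.2]⟩
    have hcos' : cos (θ - α) ≤ 0 := by
      rw [← cos_neg, neg_sub]
      exact cos_nonpos_of_pi_div_two_le_of_le (by linarith [hθ.2]) (by linarith [hθ.1])
    simp only [abs_of_nonneg hcos, abs_of_nonpos hcos', mul_neg]
  have hpos : ∫ θ in (α - π / 2)..(π / 2), |cos θ| * |cos (θ - α)|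
      = ∫ θ in (α - π / 2)..(π / 2), cos θ * cos (θ - α) := by
    refine integral_congr fun θ hθ ↦ ?_
    rw [Set.uIcc_of_le (by linarith)] at hθ
    have hcos : 0 ≤ cos θ := cos_nonneg_of_mem_Icc ⟨by linarith [hθ.1], hθ.2⟩
    have hcos' : 0 ≤ cos (θ - α) :=
      cos_nonneg_of_mem_Icc ⟨by linarith [hθ.1], by linarith [hθ.2]⟩
    simp only [abs_of_nonneg hcos, abs_of_nonneg hcos']
  rw [hneg, hpos, integral_cos_mul_cos_sub, integral_cos_mul_cos_sub,
    show 2 * (α - π / 2) - α = α - π by ring, sin_sub_pi,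
    show 2 * -(π / 2) - α = -(α + π) by ring, sin_neg, sin_add_pi,
    show 2 * (π / 2) - α = π - α by ring, sin_pi_sub, smul_eq_mul]
  ring

theorem integral_neg_pi_pi_abReLU_mul_abReLU_cos_sub (a b : ℝ) (h₀ : 0 ≤ α) (hπ : α ≤ π) :
    ∫ θ in (-π)..π, (a * cos θ + b * |cos θ|) * (a * cos (θ - α) + b * |cos (θ - α)|) =
      a ^ 2 * (π * cos α) + b ^ 2 * ((π - 2 * α) * cos α + 2 * sin α) := by
  have hexpand : (fun θ ↦ (a * cos θ + b * |cos θ|) * (a * cos (θ - α) + b * |cos (θ - α)|)) =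
      fun θ ↦ a ^ 2 * (cos θ * cos (θ - α)) + a * b * (cos θ * |cos (θ - α)|) +
        a * b * (|cos θ| * cos (θ - α)) + b ^ 2 * (|cos θ| * |cos (θ - α)|) := by
    ext θ; ring
  rw [hexpand, intervalIntegral.integral_add, intervalIntegral.integral_add,
    intervalIntegral.integral_add]
  all_goals try exact Continuous.intervalIntegrable (by fun_prop) _ _
  simp only [intervalIntegral.integral_const_mul, integral_neg_pi_pi_cos_mul_cos_sub,
    integral_neg_pi_pi_cos_mul_abs_cos_sub, integral_neg_pi_pi_abs_cos_mul_cos_sub,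
    integral_neg_pi_pi_abs_cos_mul_abs_cos_sub h₀ hπ]
  ring

end Trigonometric

theorem sigma_sq_dual_abReLU (a b : ℝ) (hab : 0 < a ^ 2 + b ^ 2)
    (ρ : ℝ) (hρ : ρ ∈ Set.Icc (-1 : ℝ) 1) :
    (a ^ 2 + b ^ 2)⁻¹ * dualFn (fun s => a * s + b * |s|) ρ =
      ρ + (b ^ 2 / (a ^ 2 + b ^ 2)) * (2 / π) *
        (Real.sqrt (1 - ρ ^ 2) - ρ * Real.arccos ρ) := by
  have hhom : ∀ r : ℝ, 0 ≤ r → ∀ s, a * (r * s) + b * |r * s| = r * (a * s + b * |s|) :=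
    fun r hr s ↦ by rw [abs_mul, abs_of_nonneg hr]; ring
  rw [dualFn_eq_of_homogeneous (by fun_prop) hhom hρ,
    integral_neg_pi_pi_abReLU_mul_abReLU_cos_sub a b (arccos_nonneg ρ) (arccos_le_pi ρ),
    cos_arccos hρ.1 hρ.2, sin_arccos]
  field_simp
  ring
end

section
/- Let $\Delta \in [0,1]$ and define $\zeta : [0,1] \to \mathbb{R}$ by $\zeta(z) = z - \Delta \frac{1}{\pi}(\sqrt{1-(1-2z)^2} - (1-2z)\arccos(1-2z))$. Then $\zeta$ admits the expansion $\zeta(z) = z - \Delta \sum_{r \in 2\mathbb{N}+3} b_r z^{r/2}$ where $b_r = \frac{2}{\pi} \frac{((\frac{r}{r-2})^2-1)((r-2)!!)^2}{r!}$ for odd $r \geq 3$. -/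
/-!
With `s = √z` one has `arccos (1 - 2z) = 2 arcsin s` and `√(1 - (1 - 2z)²) = 2s√(1 - s²)`, so
the bracket in `ζ` is `2 g(s)` for `g(s) = s√(1 - s²) - (1 - 2s²) arcsin s`, and `g' = 4s arcsin s`.
Integrating the binomial series `(1 - x)^(-1/2) = ∑ (2n-1)!!/(2n)!! xⁿ` termwise at `x = s²`
gives the series of `arcsin`, and integrating `4s arcsin s` once more gives the series of `g`,
whose coefficients `4 (2n-1)!!/((2n)!! (2n+1) (2n+3))` are exactly `(π/2) b_{2n+3}`. They are
`O(1/n²)`, so the series converges uniformly on `[0, 1]` and the identity extends to `s = 1`.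
-/

open Real Nat

/-- The coefficient `b_r` for odd `r = 2n+3`:
`b_r = (2/π) ((r/(r-2))² - 1)((r-2)!!)² / r!`. -/
noncomputable def brCoef (n : ℕ) : ℝ :=
  (2 / π) * ((((2 * n + 3 : ℕ) : ℝ) / ((2 * n + 1 : ℕ) : ℝ)) ^ 2 - 1) *
    ((Nat.doubleFactorial (2 * n + 1) : ℝ)) ^ 2 / (Nat.factorial (2 * n + 3))

/-- `(2n-1)!!/(2n)!!`, the `n`-th Taylor coefficient of `(1 - x)^(-1/2)`. -/
noncomputable def invSqrtCoeff (n : ℕ) : ℝ := Ring.multichoose (2⁻¹ : ℝ) n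

lemma invSqrtCoeff_zero : invSqrtCoeff 0 = 1 := by
  simp [invSqrtCoeff]

lemma invSqrtCoeff_succ (n : ℕ) :
    invSqrtCoeff (n + 1) = invSqrtCoeff n * (2 * n + 1) / (2 * n + 2) := by
  have h := Ring.factorial_nsmul_multichoose_eq_ascPochhammer (2⁻¹ : ℝ)
  simp only [Polynomial.ascPochhammer_smeval_eq_eval, nsmul_eq_mul] at h
  have hrec := h (n + 1)
  rw [ascPochhammer_succ_eval, ← h n, Nat.factorial_succ] at hrec
  unfold invSqrtCoeff
  generalize Ring.multichoose (2⁻¹ : ℝ) n = a, Ring.multichoose (2⁻¹ : ℝ) (n + 1) = b at hrec ⊢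
  push_cast at hrec
  have hrec' : (n + 1) * b = a * (2⁻¹ + n) :=
    mul_left_cancel₀ (Nat.cast_ne_zero.2 n.factorial_ne_zero) (by linear_combination hrec)
  field_simp
  linear_combination 2 * hrec'

lemma invSqrtCoeff_nonneg (n : ℕ) : 0 ≤ invSqrtCoeff n := by
  induction n with
  | zero => simp [invSqrtCoeff_zero]
  | succ n ih => rw [invSqrtCoeff_succ]; positivity

lemma invSqrtCoeff_le_one (n : ℕ) : invSqrtCoeff n ≤ 1 := by
  induction n with
  | zero => simp [invSqrtCoeff_zero]
  | succ n ih =>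
    rw [invSqrtCoeff_succ, div_le_one (by positivity)]
    nlinarith [invSqrtCoeff_nonneg n]

lemma abs_invSqrtCoeff_le_one (n : ℕ) : |invSqrtCoeff n| ≤ 1 :=
  abs_le.2 ⟨by linarith [invSqrtCoeff_nonneg n], invSqrtCoeff_le_one n⟩

lemma invSqrtCoeff_mul_eq_doubleFactorial (n : ℕ) :
    invSqrtCoeff n * ((2 * n + 1 : ℕ) * 2 ^ n * n !) = (2 * n + 1)‼ := by
  induction n with
  | zero => simp [invSqrtCoeff_zero]
  | succ n ih =>
    rw [show 2 * (n + 1) + 1 = 2 * n + 1 + 2 by ring, Nat.doubleFactorial_add_two,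
      invSqrtCoeff_succ, Nat.factorial_succ, Nat.cast_mul, Nat.cast_mul, ← ih]
    push_cast
    field_simp
    ring

lemma hasSum_invSqrtCoeff_mul_pow {x : ℝ} (hx : |x| < 1) :
    HasSum (fun n ↦ invSqrtCoeff n * x ^ n) (1 / √(1 - x)) := by
  have h := (one_div_one_sub_rpow_hasFPowerSeriesOnBall_zero (2⁻¹ : ℝ)).hasSum
    (y := x) (by simpa [enorm_eq_nnnorm, ← NNReal.coe_lt_one] using hx)
  simp only [FormalMultilinearSeries.ofScalars_apply_eq, smul_eq_mul, zero_add,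
    ← Ring.multichoose_eq] at h
  rwa [Real.sqrt_eq_rpow, one_div 2]

lemma factorial_two_mul_add_three (n : ℕ) :
    (2 * n + 3)! = (2 * n + 3) * (2 * n + 1)‼ * (2 ^ (n + 1) * (n + 1)!) := by
  rw [show 2 * n + 3 = 2 * n + 2 + 1 by ring, Nat.factorial_eq_mul_doubleFactorial,
    show 2 * n + 2 + 1 = 2 * n + 1 + 2 by ring, Nat.doubleFactorial_add_two,
    show 2 * n + 2 = 2 * (n + 1) by ring, Nat.doubleFactorial_two_mul]

lemma brCoef_eq (n : ℕ) :
    brCoef n = 2 / π * (4 * invSqrtCoeff n / (2 * n + 1 : ℕ) / (2 * n + 3 : ℕ)) := by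
  rw [brCoef, factorial_two_mul_add_three, Nat.factorial_succ]
  push_cast
  rw [← invSqrtCoeff_mul_eq_doubleFactorial]
  push_cast
  field_simp
  ring

section TermwiseDerivative

variable {b : ℕ → ℝ} {m : ℕ → ℕ} {B : ℝ}

lemma abs_mul_pow_le (hb : ∀ n, |b n| ≤ B) (hm : ∀ n, n ≤ m n) {y r : ℝ} (hy : |y| ≤ r)
    (hr : r ≤ 1) (n : ℕ) : |b n * y ^ m n| ≤ B * r ^ n := by
  rw [abs_mul, abs_pow]
  exact mul_le_mul (hb n) ((pow_le_pow_left₀ (abs_nonneg y) hy _).trans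
    (pow_le_pow_of_le_one ((abs_nonneg y).trans hy) hr (hm n))) (by positivity)
    ((abs_nonneg _).trans (hb n))

lemma summable_mul_pow_of_abs_le (hb : ∀ n, |b n| ≤ B) (hm : ∀ n, n ≤ m n) {x : ℝ}
    (hx : |x| < 1) : Summable fun n ↦ b n * x ^ m n :=
  .of_norm_bounded ((summable_geometric_of_lt_one (abs_nonneg x) hx).mul_left B)
    (abs_mul_pow_le hb hm le_rfl hx.le)

lemma summable_mul_pow_div (hb : ∀ n, |b n| ≤ B) (hm : ∀ n, n ≤ m n) {x : ℝ}
    (hx : |x| < 1) : Summable fun n ↦ b n * x ^ (m n + 1) / (m n + 1 : ℕ) := by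
  have hb' (n : ℕ) : |b n / (m n + 1 : ℕ)| ≤ B := by
    rw [abs_div, Nat.abs_cast]
    exact (_root_.div_le_self (abs_nonneg _) (by norm_cast; omega)).trans (hb n)
  refine (summable_mul_pow_of_abs_le (m := fun n ↦ m n + 1) hb' (fun n ↦ (hm n).trans
    (Nat.le_succ _)) hx).congr fun n ↦ ?_
  ring

lemma hasDerivAt_tsum_mul_pow_div (hb : ∀ n, |b n| ≤ B) (hm : ∀ n, n ≤ m n) {x : ℝ}
    (hx : |x| < 1) :
    HasDerivAt (fun y ↦ ∑' n, b n * y ^ (m n + 1) / (m n + 1 : ℕ)) (∑' n, b n * x ^ m n) x := by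
  obtain ⟨r, hxr, hr⟩ := exists_between hx
  have hr0 : 0 < r := (abs_nonneg x).trans_lt hxr
  refine hasDerivAt_tsum_of_isPreconnected (g := fun n y ↦ b n * y ^ (m n + 1) / (m n + 1 : ℕ))
    (g' := fun n y ↦ b n * y ^ m n)
    ((summable_geometric_of_lt_one hr0.le hr).mul_left B) isOpen_Ioo isPreconnected_Ioo
    (fun n y _ ↦ ?_) (fun n y hy ↦ abs_mul_pow_le hb hm (abs_le.2 ⟨hy.1.le, hy.2.le⟩) hr.le n)
    (y₀ := 0) ⟨by linarith, by linarith⟩ (by simp) (abs_lt.1 hxr)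
  refine (((hasDerivAt_pow (m n + 1) y).const_mul (b n)).div_const _).congr_deriv ?_
  rw [Nat.add_sub_cancel]
  field_simp

end TermwiseDerivative

theorem hasSum_arcsin {x : ℝ} (hx : |x| < 1) :
    HasSum (fun n ↦ invSqrtCoeff n * x ^ (2 * n + 1) / (2 * n + 1 : ℕ)) (arcsin x) := by
  have hm (n : ℕ) : n ≤ 2 * n := by omega
  set F := fun y ↦ ∑' n, invSqrtCoeff n * y ^ (2 * n + 1) / (2 * n + 1 : ℕ)
  have hF (y : ℝ) (hy : y ∈ Set.Ioo (-1) 1) : HasDerivAt F (1 / √(1 - y ^ 2)) y := by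
    have hy2 : |y ^ 2| < 1 := by
      rw [abs_pow]; exact pow_lt_one₀ (abs_nonneg y) (abs_lt.2 hy) two_ne_zero
    convert hasDerivAt_tsum_mul_pow_div (m := fun n ↦ 2 * n) abs_invSqrtCoeff_le_one hm
      (abs_lt.2 hy) using 1
    simp only [pow_mul, (hasSum_invSqrtCoeff_mul_pow hy2).tsum_eq]
  have harcsin (y : ℝ) (hy : y ∈ Set.Ioo (-1) 1) : HasDerivAt arcsin (1 / √(1 - y ^ 2)) y :=
    hasDerivAt_arcsin hy.1.ne' hy.2.ne
  have hFeq : Set.EqOn F arcsin (Set.Ioo (-1) 1) :=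
    isOpen_Ioo.eqOn_of_deriv_eq isPreconnected_Ioo
      (fun y hy ↦ (hF y hy).differentiableAt.differentiableWithinAt)
      (fun y hy ↦ (harcsin y hy).differentiableAt.differentiableWithinAt)
      (fun y hy ↦ (hF y hy).deriv.trans (harcsin y hy).deriv.symm)
      (show (0 : ℝ) ∈ Set.Ioo (-1) 1 by norm_num) (by simp [F])
  rw [← hFeq (abs_lt.1 hx)]
  exact (summable_mul_pow_div (m := fun n ↦ 2 * n) abs_invSqrtCoeff_le_one hm hx).hasSum

lemma hasDerivAt_mul_sqrt_sub_arcsin {x : ℝ} (hx : x ∈ Set.Ioo (-1) 1) :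
    HasDerivAt (fun s ↦ s * √(1 - s ^ 2) - (1 - 2 * s ^ 2) * arcsin s) (4 * x * arcsin x) x := by
  have hpos : 0 < 1 - x ^ 2 := by nlinarith [hx.1, hx.2]
  have hsqrt : HasDerivAt (fun s ↦ √(1 - s ^ 2)) (-(2 * x) / (2 * √(1 - x ^ 2))) x := by
    refine (((hasDerivAt_pow 2 x).const_sub 1).sqrt hpos.ne').congr_deriv ?_
    simp
  have hderiv := ((hasDerivAt_id x).mul hsqrt).sub
    ((((hasDerivAt_pow 2 x).const_mul 2).const_sub 1).mul (hasDerivAt_arcsin hx.1.ne' hx.2.ne))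
  refine hderiv.congr_deriv ?_
  have hsq := Real.sq_sqrt hpos.le
  have hne := (Real.sqrt_pos.2 hpos).ne'
  field_simp
  simp only [id_eq, Nat.cast_ofNat, Nat.add_one_sub_one, pow_one]
  linear_combination hsq

lemma abs_four_mul_invSqrtCoeff_mul_pow_le {y : ℝ} (hy : |y| ≤ 1) (n : ℕ) :
    |4 * invSqrtCoeff n / (2 * n + 1 : ℕ) * y ^ (2 * n + 3) / (2 * n + 3 : ℕ)| ≤
      4 / ((n : ℝ) + 1) ^ 2 := by
  have hc := invSqrtCoeff_nonneg n
  calc _ = 4 * (invSqrtCoeff n * |y| ^ (2 * n + 3)) / ((2 * n + 1) * (2 * n + 3)) := by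
        rw [abs_div, abs_mul, abs_div, abs_mul, abs_pow, abs_of_nonneg hc, Nat.abs_cast,
          Nat.abs_cast]
        push_cast
        field_simp
        ring
    _ ≤ 4 * 1 / ((2 * n + 1) * (2 * n + 3)) := by
        gcongr
        exact mul_le_one₀ (invSqrtCoeff_le_one n) (by positivity)
          (pow_le_one₀ (abs_nonneg y) hy)
    _ ≤ 4 / ((n : ℝ) + 1) ^ 2 := by
        rw [mul_one]
        gcongr
        nlinarith

lemma summable_four_div_succ_sq : Summable fun n : ℕ ↦ 4 / ((n : ℝ) + 1) ^ 2 :=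
  ((summable_nat_add_iff 1).2 (Real.summable_one_div_nat_pow.2 one_lt_two)).mul_left 4
    |>.congr fun n ↦ by push_cast; ring

theorem hasSum_mul_sqrt_sub_arcsin {s : ℝ} (hs : s ∈ Set.Icc (0 : ℝ) 1) :
    HasSum (fun n ↦ 4 * invSqrtCoeff n / (2 * n + 1 : ℕ) * s ^ (2 * n + 3) / (2 * n + 3 : ℕ))
      (s * √(1 - s ^ 2) - (1 - 2 * s ^ 2) * arcsin s) := by
  set F := fun y ↦
    ∑' n, 4 * invSqrtCoeff n / (2 * n + 1 : ℕ) * y ^ (2 * n + 3) / (2 * n + 3 : ℕ)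
  have hb (n : ℕ) : |4 * invSqrtCoeff n / (2 * n + 1 : ℕ)| ≤ 4 := by
    have := invSqrtCoeff_nonneg n
    rw [abs_of_nonneg (by positivity), div_le_iff₀ (by positivity)]
    push_cast
    nlinarith [invSqrtCoeff_le_one n]
  have hF (x : ℝ) (hx : x ∈ Set.Ico 0 1) : HasDerivAt F (4 * x * arcsin x) x := by
    have hx' : |x| < 1 := abs_lt.2 ⟨by linarith [hx.1], hx.2⟩
    convert hasDerivAt_tsum_mul_pow_div (m := fun n ↦ 2 * n + 2) hb (fun n ↦ by omega) hx'
      using 1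
    rw [← ((hasSum_arcsin hx').mul_left (4 * x)).tsum_eq]
    exact tsum_congr fun n ↦ by push_cast; ring
  have hFcont : ContinuousOn F (Set.Icc 0 1) :=
    continuousOn_tsum (fun n ↦ by fun_prop) summable_four_div_succ_sq fun n y hy ↦
      abs_four_mul_invSqrtCoeff_mul_pow_le (abs_le.2 ⟨by linarith [hy.1], hy.2⟩) n
  have hFeq := eq_of_has_deriv_right_eq (fun x hx ↦ (hF x hx).hasDerivWithinAt)
    (fun x hx ↦ (hasDerivAt_mul_sqrt_sub_arcsin ⟨by linarith [hx.1], hx.2⟩).hasDerivWithinAt)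
    hFcont (by fun_prop) (by simp [F]) s hs
  rw [← hFeq]
  exact (summable_four_div_succ_sq.of_norm_bounded
    (abs_four_mul_invSqrtCoeff_mul_pow_le (abs_le.2 ⟨by linarith [hs.1], hs.2⟩))).hasSum

lemma arccos_one_sub_two_mul_sq {s : ℝ} (hs : s ∈ Set.Icc (0 : ℝ) 1) :
    arccos (1 - 2 * s ^ 2) = 2 * arcsin s := by
  have hcos : cos (2 * arcsin s) = 1 - 2 * s ^ 2 := by
    rw [cos_two_mul, cos_arcsin, Real.sq_sqrt (by nlinarith [hs.1, hs.2])]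
    ring
  rw [← hcos, arccos_cos] <;> linarith [arcsin_nonneg.2 hs.1, arcsin_le_pi_div_two s]

lemma sqrt_one_sub_sq_one_sub_two_mul_sq {s : ℝ} (hs : 0 ≤ s) :
    √(1 - (1 - 2 * s ^ 2) ^ 2) = 2 * s * √(1 - s ^ 2) := by
  rw [show 1 - (1 - 2 * s ^ 2) ^ 2 = (2 * s) ^ 2 * (1 - s ^ 2) by ring,
    Real.sqrt_mul (by positivity), Real.sqrt_sq (by positivity)]

theorem zeta_series_general (Δ : ℝ)
    (z : ℝ) (hz : z ∈ Set.Icc (0 : ℝ) 1) :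
    Summable (fun n : ℕ => brCoef n * z ^ (((2 * n + 3 : ℕ) : ℝ) / 2)) ∧
    z - Δ * (1 / π) *
        (Real.sqrt (1 - (1 - 2 * z) ^ 2) - (1 - 2 * z) * Real.arccos (1 - 2 * z)) =
      z - Δ * ∑' n : ℕ, brCoef n * z ^ (((2 * n + 3 : ℕ) : ℝ) / 2) := by
  have hs : √z ∈ Set.Icc (0 : ℝ) 1 := ⟨Real.sqrt_nonneg z, Real.sqrt_le_one.2 hz.2⟩
  have hterm : (fun n : ℕ ↦ brCoef n * z ^ (((2 * n + 3 : ℕ) : ℝ) / 2)) = fun n ↦ 2 / π *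
      (4 * invSqrtCoeff n / (2 * n + 1 : ℕ) * √z ^ (2 * n + 3) / (2 * n + 3 : ℕ)) := by
    ext n
    rw [brCoef_eq, rpow_div_two_eq_sqrt _ hz.1, Real.rpow_natCast]
    ring
  have hvalue : 1 / π * (√(1 - (1 - 2 * z) ^ 2) - (1 - 2 * z) * arccos (1 - 2 * z)) =
      2 / π * (√z * √(1 - √z ^ 2) - (1 - 2 * √z ^ 2) * arcsin √z) := by
    conv_lhs => rw [← Real.sq_sqrt hz.1]
    rw [arccos_one_sub_two_mul_sq hs, sqrt_one_sub_sq_one_sub_two_mul_sq hs.1]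
    ring
  have hsum := (hasSum_mul_sqrt_sub_arcsin hs).mul_left (2 / π)
  rw [← hterm, ← hvalue] at hsum
  exact ⟨hsum.summable, by rw [hsum.tsum_eq]; ring⟩

/-- Expansion of the squared cosine distance map:
`ζ(z) = z - Δ ∑_{r odd ≥ 3} b_r z^{r/2}`. -/
theorem zeta_series (Δ : ℝ) (hΔ : Δ ∈ Set.Icc (0 : ℝ) 1)
    (z : ℝ) (hz : z ∈ Set.Icc (0 : ℝ) 1) :
    Summable (fun n : ℕ => brCoef n * z ^ (((2 * n + 3 : ℕ) : ℝ) / 2)) ∧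
    z - Δ * (1 / π) *
        (Real.sqrt (1 - (1 - 2 * z) ^ 2) - (1 - 2 * z) * Real.arccos (1 - 2 * z)) =
      z - Δ * ∑' n : ℕ, brCoef n * z ^ (((2 * n + 3 : ℕ) : ℝ) / 2) :=
  zeta_series_general Δ z hz
end
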